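/- Given (m_1, ..., m_{2N}) in the interior of the moment space M_{2N}^{[0,1]}, there exist unique points 0 < x_1 < ... < x_N < 1 and weights w_0, w_1, ..., w_N ∈ (0,1) with w_0 + Σ_{k=1}^N w_k = 1 such that the measure ν = w_0 δ_0 + Σ_{k=1}^N w_k δ_{x_k} satisfies ∫_0^1 x^j dν(x) = m_j for j = 1, ..., 2N (lower principal representation, even case). -/

import Mathlib

/-!
For interior `m` the functional `L p = p₀ + ∑ⱼ mⱼ p_{j+1}` is strictly positive on the nonzero
polynomials of degree `≤ 2N` that are nonnegative on `[0, 1]`: it is nonnegative there for every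
point of the moment space, and if it vanished at `p` then moving `m` against a nonzero coefficient
of `p` would make it negative. So `(p, q) ↦ L (X p q)` is an inner product on polynomials of degree
`< N`, and there is a unique monic `Q` of degree `N` orthogonal to all of them. A sign argument
shows that `Q` has `N` simple roots in `(0, 1)`; with `0` they are the nodes of a Gauss–Radau
quadrature for `L`, exact up to degree `2N`, whose weights `L ℓᵢ = L ℓᵢ²` (`ℓᵢ` the Lagrange basis)
are positive. Conversely, for any such representation `∏ₖ (X - xₖ)` is orthogonal, hence equal to
`Q`, and the weights are `L ℓᵢ` again.
-/

open MeasureTheory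

/-- The `n`-th moment space of probability measures on `[0,1]`:
`M_n = {(∫x dμ, …, ∫xⁿ dμ) : μ ∈ M₁([0,1])}`. -/
noncomputable def momentSpace (n : ℕ) : Set (Fin n → ℝ) :=
  {m | ∃ μ : Measure ℝ, IsProbabilityMeasure μ ∧ μ (Set.Icc (0 : ℝ) 1)ᶜ = 0 ∧
    ∀ j : Fin n, m j = ∫ x, x ^ (j.1 + 1) ∂μ}

open Polynomial Set Function Lagrange Filter Topology

namespace Polynomial

theorem linearMap_apply_eq_of_X_pow {R M : Type*} [CommSemiring R] [AddCommMonoid M] [Module R M]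
    {φ ψ : R[X] →ₗ[R] M} {d : ℕ} (h : ∀ i < d, φ (X ^ i) = ψ (X ^ i)) {f : R[X]}
    (hf : f.natDegree < d) : φ f = ψ f := by
  rw [f.as_sum_range' d hf, map_sum, map_sum]
  refine Finset.sum_congr rfl fun i hi => ?_
  rw [← smul_X_eq_monomial, map_smul, map_smul, h i (Finset.mem_range.1 hi)]

theorem eq_prod_X_sub_C_of_card_le {K : Type*} [Field K] {Q : K[X]} (hQ : Q.Monic)
    {F : Finset K} (hF : ∀ t ∈ F, Q.IsRoot t) (hcard : Q.natDegree ≤ F.card) :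
    Q = ∏ t ∈ F, (X - C t) := by
  have hroots : F.val = Q.roots := by
    refine Multiset.eq_of_le_of_card_le ((Multiset.le_iff_subset F.nodup).2 fun t ht => ?_)
      ((Q.card_roots').trans hcard)
    exact (mem_roots hQ.ne_zero).2 (hF t ht)
  rw [← prod_multiset_X_sub_C_of_monic_of_roots_card_eq hQ
    (le_antisymm Q.card_roots' (hroots ▸ hcard)), ← hroots]
  rfl

theorem eq_of_prod_X_sub_C_eq {K : Type*} [Field K] [LinearOrder K] {n : ℕ}
    {x y : Fin n → K} (hx : StrictMono x) (hy : StrictMono y)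
    (h : ∏ k, (X - C (x k)) = ∏ k, (X - C (y k))) : x = y := by
  have roots_eq (z : Fin n → K) : (∏ k, (X - C (z k))).roots = Finset.univ.val.map z := by
    rw [← roots_multiset_prod_X_sub_C (Finset.univ.val.map z), Multiset.map_map]
    rfl
  have hroots := congrArg roots h
  rw [roots_eq, roots_eq] at hroots
  refine (hx.range_inj hy).1 ?_
  ext t
  simpa using congrArg (t ∈ ·) hroots

theorem eval_mul_eval_nonneg_of_even_rootMultiplicity {S : Set ℝ} (hS : IsPreconnected S)
    {p : ℝ[X]} (hp : ∀ t ∈ S, Even (p.rootMultiplicity t)) {x y : ℝ} (hx : x ∈ S) (hy : y ∈ S) :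
    0 ≤ p.eval x * p.eval y := by
  induction hd : p.natDegree using Nat.strong_induction_on generalizing p with
  | _ d ih =>
  rcases eq_or_ne p 0 with rfl | hp0
  · simp
  by_cases hroot : ∃ t ∈ S, p.IsRoot t
  · obtain ⟨t, ht, hpt⟩ := hroot
    have htwo : 2 ≤ p.rootMultiplicity t := by
      obtain ⟨k, hk⟩ := hp t ht
      have := (rootMultiplicity_pos hp0).2 hpt
      omega
    obtain ⟨q, rfl⟩ := (pow_dvd_pow (X - C t) htwo).trans (p.pow_rootMultiplicity_dvd t)
    have hq0 : q ≠ 0 := right_ne_zero_of_mul hp0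
    have hq : ∀ s ∈ S, Even (q.rootMultiplicity s) := fun s hs => by
      classical
      have := hp s hs
      rw [← count_roots, roots_mul hp0, roots_pow, roots_X_sub_C, Multiset.count_add,
        Multiset.count_nsmul, count_roots] at this
      simpa [Nat.even_add] using this
    have hdeg : q.natDegree < d := by
      rw [← hd, natDegree_mul (pow_ne_zero _ (X_sub_C_ne_zero t)) hq0, natDegree_pow,
        natDegree_X_sub_C]
      omega
    have hsq : 0 ≤ (x - t) ^ 2 * (y - t) ^ 2 := by positivity
    calc 0 ≤ (x - t) ^ 2 * (y - t) ^ 2 * (q.eval x * q.eval y) :=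
          mul_nonneg hsq (ih _ hdeg hq rfl)
      _ = _ := by simp only [eval_mul, eval_pow, eval_sub, eval_X, eval_C]; ring
  · push Not at hroot
    by_contra! hneg
    have hcont : ContinuousOn (fun z => p.eval z) S := p.continuous.continuousOn
    obtain ⟨t, ht, hpt⟩ : 0 ∈ (fun z => p.eval z) '' S := by
      rcases mul_neg_iff.1 hneg with ⟨hx', hy'⟩ | ⟨hx', hy'⟩
      · exact hS.intermediate_value hy hx hcont ⟨hy'.le, hx'.le⟩
      · exact hS.intermediate_value hx hy hcont ⟨hx'.le, hy'.le⟩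
    exact hroot t ht hpt

theorem rootMultiplicity_prod_X_sub_C {K : Type*} [Field K] [DecidableEq K] (F : Finset K)
    (t : K) : (∏ s ∈ F, (X - C s)).rootMultiplicity t = if t ∈ F then 1 else 0 := by
  rw [← count_roots, roots_prod_X_sub_C]
  exact Multiset.count_eq_of_nodup F.nodup

section Orthogonal

variable {K : Type*} [Field K]

theorem exists_monic_orthogonal (φ : K[X] →ₗ[K] K) (N : ℕ)
    (hφ : ∀ q ∈ degreeLT K N, φ (q * q) = 0 → q = 0) :
    ∃ Q : K[X], Q.Monic ∧ Q.natDegree = N ∧ ∀ r ∈ degreeLT K N, φ (Q * r) = 0 := by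
  have : FiniteDimensional K (degreeLT K N) := .equiv (degreeLTEquiv K N).symm
  let B : degreeLT K N →ₗ[K] Module.Dual K (degreeLT K N) :=
    LinearMap.mk₂ K (fun q r => φ (q * r)) (by simp [add_mul]) (by simp)
      (by simp [mul_add]) (by simp)
  have hB : Injective B := by
    rw [← LinearMap.ker_eq_bot, LinearMap.ker_eq_bot']
    exact fun q hq => Subtype.ext (hφ q q.2 (LinearMap.congr_fun hq q))
  obtain ⟨q, hq⟩ := (LinearMap.injective_iff_surjective_of_finrank_eq_finrank
    Subspace.dual_finrank_eq.symm).1 hB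
    (-(φ ∘ₗ LinearMap.mulLeft K (X ^ N) ∘ₗ (degreeLT K N).subtype))
  have hqdeg : (q : K[X]).degree < N := mem_degreeLT.1 q.2
  refine ⟨X ^ N + (q : K[X]), monic_X_pow_add hqdeg, ?_, fun r hr => ?_⟩
  · rw [natDegree_add_eq_left_of_degree_lt (by rwa [degree_X_pow]), natDegree_X_pow]
  · have := LinearMap.congr_fun hq ⟨r, hr⟩
    simp only [B, LinearMap.mk₂_apply, LinearMap.neg_apply, LinearMap.comp_apply,
      Submodule.subtype_apply, LinearMap.mulLeft_apply] at this
    rw [add_mul, map_add, this, add_neg_cancel]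

theorem monic_orthogonal_unique (φ : K[X] →ₗ[K] K) (N : ℕ)
    (hφ : ∀ q ∈ degreeLT K N, φ (q * q) = 0 → q = 0) {Q Q' : K[X]}
    (hQ : Q.Monic) (hQN : Q.natDegree = N) (horth : ∀ r ∈ degreeLT K N, φ (Q * r) = 0)
    (hQ' : Q'.Monic) (hQ'N : Q'.natDegree = N) (horth' : ∀ r ∈ degreeLT K N, φ (Q' * r) = 0) :
    Q = Q' := by
  have hdeg : Q - Q' ∈ degreeLT K N := by
    rw [mem_degreeLT, ← hQN, ← degree_eq_natDegree hQ.ne_zero]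
    refine degree_sub_lt_left ?_ hQ.ne_zero (by rw [hQ.leadingCoeff, hQ'.leadingCoeff])
    rw [degree_eq_natDegree hQ.ne_zero, degree_eq_natDegree hQ'.ne_zero, hQN, hQ'N]
  refine sub_eq_zero.1 (hφ _ hdeg ?_)
  rw [sub_mul, map_sub, horth _ hdeg, horth' _ hdeg, sub_zero]

end Orthogonal

end Polynomial

section QuadratureRule

variable {K ι : Type*} [Field K] [Fintype ι]

theorem nodal_cons_zero {N : ℕ} (x : Fin N → K) :
    nodal Finset.univ (Fin.cons 0 x : Fin (N + 1) → K) = X * ∏ k, (X - C (x k)) := by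
  simp [nodal, Fin.prod_univ_succ]

def IsQuadratureRule (L : K[X] →ₗ[K] K) (d : ℕ) (v w : ι → K) : Prop :=
  ∀ f : K[X], f.natDegree < d → L f = ∑ i, w i * f.eval (v i)

namespace IsQuadratureRule

variable {L : K[X] →ₗ[K] K} {d : ℕ} {v w : ι → K}

theorem map_nodal_mul (hq : IsQuadratureRule L d v w) {r : K[X]}
    (hr : (nodal Finset.univ v * r).natDegree < d) : L (nodal Finset.univ v * r) = 0 := by
  rw [hq _ hr]
  exact Finset.sum_eq_zero fun i hi => by rw [eval_mul, eval_nodal_at_node hi, zero_mul, mul_zero]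

theorem orthogonal_of_cons_zero {N : ℕ} {x : Fin N → K} {w : Fin (N + 1) → K}
    (hq : IsQuadratureRule L (2 * N + 1) (Fin.cons 0 x) w) :
    ∀ r ∈ degreeLT K N, L (X * ((∏ k, (X - C (x k))) * r)) = 0 := by
  intro r hr
  rcases eq_or_ne r 0 with rfl | hr0
  · simp
  rw [← mul_assoc, ← nodal_cons_zero]
  refine hq.map_nodal_mul ?_
  rw [natDegree_mul nodal_monic.ne_zero hr0, natDegree_nodal, Finset.card_univ, Fintype.card_fin]
  have := (natDegree_lt_iff_degree_lt hr0).2 (mem_degreeLT.1 hr)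
  omega

variable [DecidableEq ι]

theorem weight_eq (hq : IsQuadratureRule L d v w) (hv : Injective v)
    (hd : Fintype.card ι ≤ d) (i : ι) : w i = L (Lagrange.basis Finset.univ v i) := by
  have hdeg : (Lagrange.basis Finset.univ v i).natDegree < d := by
    rw [natDegree_basis hv.injOn (Finset.mem_univ i), Finset.card_univ]
    have := Fintype.card_pos_iff.2 ⟨i⟩
    omega
  rw [hq _ hdeg, Fintype.sum_eq_single i fun j hj => by
    rw [eval_basis_of_ne (Ne.symm hj) (Finset.mem_univ j), mul_zero],
    eval_basis_self hv.injOn (Finset.mem_univ i), mul_one]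

end IsQuadratureRule

theorem isQuadratureRule_of_nodal_orthogonal [DecidableEq ι] (L : K[X] →ₗ[K] K) {v : ι → K}
    (hv : Injective v) {d : ℕ} (horth : ∀ r ∈ degreeLT K d, L (nodal Finset.univ v * r) = 0) :
    IsQuadratureRule L (Fintype.card ι + d) v fun i => L (Lagrange.basis Finset.univ v i) := by
  intro f hf
  set ω := nodal Finset.univ v
  have hω : ω.Monic := nodal_monic
  have hrem : f %ₘ ω = interpolate Finset.univ v fun i => f.eval (v i) := by
    refine eq_interpolate_of_eval_eq _ hv.injOn ?_ fun i hi => ?_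
    · rw [← natDegree_nodal (v := v), ← degree_eq_natDegree hω.ne_zero]
      exact degree_modByMonic_lt f hω
    · conv_rhs => rw [← modByMonic_add_div f ω]
      rw [eval_add, eval_mul, eval_nodal_at_node hi, zero_mul, add_zero]
  have hquot : f /ₘ ω ∈ degreeLT K d := by
    rw [mem_degreeLT]
    rcases eq_or_ne (f /ₘ ω) 0 with h | h
    · rw [h, degree_zero]
      exact WithBot.bot_lt_coe d
    · rw [degree_eq_natDegree h, Nat.cast_lt, natDegree_divByMonic f hω, natDegree_nodal,
        Finset.card_univ]
      have := natDegree_le_natDegree (not_lt.1 (mt (divByMonic_eq_zero_iff hω).2 h))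
      rw [natDegree_nodal, Finset.card_univ] at this
      omega
  conv_lhs => rw [← modByMonic_add_div f ω, map_add, horth _ hquot, add_zero, hrem,
    interpolate_apply, map_sum]
  refine Finset.sum_congr rfl fun i _ => ?_
  rw [← smul_eq_C_mul, map_smul, smul_eq_mul, mul_comm]

end QuadratureRule

def PositiveOnUnitInterval (L : ℝ[X] →ₗ[ℝ] ℝ) (d : ℕ) : Prop :=
  ∀ p : ℝ[X], p ≠ 0 → p.natDegree < d → (∀ x ∈ Icc (0 : ℝ) 1, 0 ≤ p.eval x) → 0 < L p

namespace PositiveOnUnitInterval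

variable {L : ℝ[X] →ₗ[ℝ] ℝ} {N : ℕ}

theorem eq_zero_of_map_X_mul_mul_self (hL : PositiveOnUnitInterval L (2 * N + 1))
    {q : ℝ[X]} (hq : q ∈ degreeLT ℝ N) (h : L (X * (q * q)) = 0) : q = 0 := by
  by_contra hq0
  have hdeg : q.natDegree < N := (natDegree_lt_iff_degree_lt hq0).2 (mem_degreeLT.1 hq)
  refine (hL _ (by simp [hq0]) ?_ fun x hx => ?_).ne' h
  · rw [natDegree_X_mul (mul_ne_zero hq0 hq0), natDegree_mul hq0 hq0]
    omega
  · simpa only [eval_mul, eval_X] using mul_nonneg hx.1 (mul_self_nonneg (q.eval x))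

theorem map_X_mul_ne_zero_of_even_rootMultiplicity (hL : PositiveOnUnitInterval L (2 * N + 1))
    {p : ℝ[X]} (hp0 : p ≠ 0) (hpN : p.natDegree < 2 * N)
    (heven : ∀ t ∈ Ioo (0 : ℝ) 1, Even (p.rootMultiplicity t)) : L (X * p) ≠ 0 := by
  obtain ⟨c, hc, hcroot⟩ := (Ioo_infinite zero_lt_one).exists_notMem_finset p.roots.toFinset
  have hc0 : p.eval c ≠ 0 := fun h => hcroot (Multiset.mem_toFinset.2 ((mem_roots hp0).2 h))
  -- `p` keeps the sign of `p c` on `(0, 1)`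
  set P := C (p.eval c) * (X * p) with hP
  have hPIoo : ∀ x ∈ Ioo (0 : ℝ) 1, 0 ≤ P.eval x := fun x hx => by
    have := eval_mul_eval_nonneg_of_even_rootMultiplicity isPreconnected_Ioo heven hc hx
    simpa only [P, eval_mul, eval_C, eval_X, mul_left_comm] using mul_nonneg hx.1.le this
  have hPIcc : ∀ x ∈ Icc (0 : ℝ) 1, 0 ≤ P.eval x := by
    rw [← closure_Ioo zero_ne_one]
    exact fun x hx => (isClosed_le continuous_const P.continuous).closure_subset_iff.2 hPIoo hx
  have hPdeg : P.natDegree < 2 * N + 1 := by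
    rw [natDegree_C_mul hc0, natDegree_X_mul hp0]
    omega
  have hPpos := hL P (mul_ne_zero (C_ne_zero.2 hc0) (mul_ne_zero X_ne_zero hp0)) hPdeg hPIcc
  rw [hP, ← smul_eq_C_mul, map_smul, smul_eq_mul] at hPpos
  exact right_ne_zero_of_mul hPpos.ne'

theorem natDegree_le_card_oddRoots (hL : PositiveOnUnitInterval L (2 * N + 1))
    {Q : ℝ[X]} (hQ : Q ≠ 0) (hQN : Q.natDegree = N)
    (horth : ∀ r ∈ degreeLT ℝ N, L (X * (Q * r)) = 0) :
    N ≤ (Q.roots.toFinset.filter fun t => t ∈ Ioo (0 : ℝ) 1 ∧ Odd (Q.rootMultiplicity t)).card := by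
  classical
  set F := Q.roots.toFinset.filter fun t => t ∈ Ioo (0 : ℝ) 1 ∧ Odd (Q.rootMultiplicity t)
  set r := ∏ t ∈ F, (X - C t)
  by_contra! hF
  have hr0 : r ≠ 0 := (monic_prod_of_monic _ _ fun t _ => monic_X_sub_C t).ne_zero
  have hrdeg : r.natDegree = F.card := by simp [r]
  have hQr : Q * r ≠ 0 := mul_ne_zero hQ hr0
  have heven : ∀ t ∈ Ioo (0 : ℝ) 1, Even ((Q * r).rootMultiplicity t) := by
    intro t ht
    rw [rootMultiplicity_mul hQr, rootMultiplicity_prod_X_sub_C]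
    by_cases htF : t ∈ F
    · simpa [htF] using (Finset.mem_filter.1 htF).2.2.add_one
    · have : ¬ Odd (Q.rootMultiplicity t) := fun hodd => htF <| Finset.mem_filter.2
        ⟨Multiset.mem_toFinset.2 ((mem_roots hQ).2 ((rootMultiplicity_pos hQ).1 hodd.pos)),
          ht, hodd⟩
      simpa [htF] using this
  have hr : r ∈ degreeLT ℝ N := by
    rw [mem_degreeLT, degree_eq_natDegree hr0, hrdeg, Nat.cast_lt]
    exact hF
  refine hL.map_X_mul_ne_zero_of_even_rootMultiplicity hQr ?_ heven (horth r hr)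
  rw [natDegree_mul hQ hr0, hQN, hrdeg]
  omega

theorem exists_roots_of_orthogonal (hL : PositiveOnUnitInterval L (2 * N + 1))
    {Q : ℝ[X]} (hQ : Q.Monic) (hQN : Q.natDegree = N)
    (horth : ∀ r ∈ degreeLT ℝ N, L (X * (Q * r)) = 0) :
    ∃ x : Fin N → ℝ, StrictMono x ∧ (∀ k, x k ∈ Ioo (0 : ℝ) 1) ∧ Q = ∏ k, (X - C (x k)) := by
  classical
  set F := Q.roots.toFinset.filter fun t => t ∈ Ioo (0 : ℝ) 1 ∧ Odd (Q.rootMultiplicity t)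
  have hcard : F.card = N := by
    refine le_antisymm ?_ (hL.natDegree_le_card_oddRoots hQ.ne_zero hQN horth)
    calc F.card ≤ Q.roots.toFinset.card := Finset.card_filter_le _ _
      _ ≤ Q.roots.card := Multiset.toFinset_card_le _
      _ ≤ N := hQN ▸ Q.card_roots'
  have hQF : Q = ∏ t ∈ F, (X - C t) := by
    refine eq_prod_X_sub_C_of_card_le hQ (fun t ht => ?_) (hQN.trans_le hcard.ge)
    exact (mem_roots hQ.ne_zero).1 (Multiset.mem_toFinset.1 (Finset.mem_filter.1 ht).1)
  refine ⟨F.orderEmbOfFin hcard, (F.orderEmbOfFin hcard).strictMono,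
    fun k => (Finset.mem_filter.1 (F.orderEmbOfFin_mem hcard k)).2.1, ?_⟩
  conv_lhs => rw [hQF, ← F.map_orderEmbOfFin_univ hcard, Finset.prod_map]
  rfl

end PositiveOnUnitInterval

theorem IsQuadratureRule.weight_pos {ι : Type*} [Fintype ι] [DecidableEq ι]
    {L : ℝ[X] →ₗ[ℝ] ℝ} {d : ℕ} {v w : ι → ℝ} (hq : IsQuadratureRule L d v w)
    (hL : PositiveOnUnitInterval L d) (hv : Injective v) (hd : 2 * (Fintype.card ι - 1) < d)
    (i : ι) : 0 < w i := by
  set b := Lagrange.basis Finset.univ v i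
  have hb : b ≠ 0 := basis_ne_zero hv.injOn (Finset.mem_univ i)
  have hdeg : (b * b).natDegree < d := by
    rwa [natDegree_mul hb hb, natDegree_basis hv.injOn (Finset.mem_univ i), Finset.card_univ,
      ← two_mul]
  have := hL (b * b) (mul_ne_zero hb hb) hdeg fun x _ => by
    simpa only [eval_mul] using mul_self_nonneg (b.eval x)
  rwa [hq _ hdeg, Fintype.sum_eq_single i fun j hj => by
    rw [eval_mul, eval_basis_of_ne (Ne.symm hj) (Finset.mem_univ j), zero_mul, mul_zero],
    eval_mul, eval_basis_self hv.injOn (Finset.mem_univ i), mul_one, mul_one] at this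

theorem integral_sum_dirac {ι α : Type*} [Fintype ι] [MeasurableSpace α]
    [MeasurableSingletonClass α] (v : ι → α) {w : ι → ℝ} (hw : ∀ i, 0 ≤ w i) (f : α → ℝ) :
    ∫ x, f x ∂(∑ i, ENNReal.ofReal (w i) • Measure.dirac (v i)) = ∑ i, w i * f (v i) := by
  rw [integral_finsetSum_measure fun i _ =>
    ((integrable_const (f (v i))).congr (ae_eq_dirac f).symm).smul_measure ENNReal.ofReal_ne_top]
  refine Finset.sum_congr rfl fun i _ => ?_
  rw [integral_smul_measure, integral_dirac, ENNReal.toReal_ofReal (hw i), smul_eq_mul]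

/-- The Riesz functional of the moment sequence `(1, a 0, …, a (n - 1))`: it sends `X ^ 0` to `1`,
`X ^ (j + 1)` to `a j`, and the higher powers of `X` to `0`. -/
noncomputable def rieszFunctional {n : ℕ} (a : Fin n → ℝ) : ℝ[X] →ₗ[ℝ] ℝ :=
  lcoeff ℝ 0 + ∑ j, a j • lcoeff ℝ (j.1 + 1)

section rieszFunctional

variable {n : ℕ} (a : Fin n → ℝ)

theorem rieszFunctional_apply (p : ℝ[X]) :
    rieszFunctional a p = p.coeff 0 + ∑ j, a j * p.coeff (j.1 + 1) := by
  simp [rieszFunctional, LinearMap.sum_apply]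

theorem rieszFunctional_one : rieszFunctional a 1 = 1 := by
  simp [rieszFunctional_apply, coeff_one]

theorem rieszFunctional_X_pow_succ (j : Fin n) : rieszFunctional a (X ^ (j.1 + 1)) = a j := by
  simp [rieszFunctional_apply, coeff_X_pow, Fin.val_inj]

theorem rieszFunctional_add_smul_single (j : Fin n) (t : ℝ) (p : ℝ[X]) :
    rieszFunctional (a + t • Pi.single j 1) p = rieszFunctional a p + t * p.coeff (j.1 + 1) := by
  simp [rieszFunctional_apply, add_mul, Finset.sum_add_distrib, Pi.single_apply]
  ring

variable {a}

theorem rieszFunctional_eq_integral {μ : Measure ℝ} [IsProbabilityMeasure μ]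
    (hμ : μ (Icc (0 : ℝ) 1)ᶜ = 0) (ha : ∀ j : Fin n, a j = ∫ x, x ^ (j.1 + 1) ∂μ) {p : ℝ[X]}
    (hp : p.natDegree < n + 1) : rieszFunctional a p = ∫ x, p.eval x ∂μ := by
  have hint (q : ℝ[X]) : Integrable (fun x => q.eval x) μ := by
    rw [← Measure.restrict_eq_self_of_ae_mem (mem_ae_iff.2 hμ)]
    exact q.continuous.integrableOn_Icc
  let integral : ℝ[X] →ₗ[ℝ] ℝ :=
    { toFun q := ∫ x, q.eval x ∂μ
      map_add' q r := by simp only [eval_add, integral_add (hint q) (hint r)]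
      map_smul' c q := by simp [integral_const_mul] }
  refine linearMap_apply_eq_of_X_pow (ψ := integral) (fun i hi => ?_) hp
  rcases i with _ | i
  · simp [integral, rieszFunctional_one]
  · simp [integral, rieszFunctional_X_pow_succ a ⟨i, by omega⟩, ha]

theorem rieszFunctional_nonneg (ha : a ∈ momentSpace n) {p : ℝ[X]} (hp : p.natDegree < n + 1)
    (hnn : ∀ x ∈ Icc (0 : ℝ) 1, 0 ≤ p.eval x) : 0 ≤ rieszFunctional a p := by
  obtain ⟨μ, _, hμ, hmom⟩ := ha
  rw [rieszFunctional_eq_integral hμ hmom hp]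
  refine integral_nonneg_of_ae ?_
  filter_upwards [mem_ae_iff.2 hμ] with x hx using hnn x hx

theorem positiveOnUnitInterval_rieszFunctional (ha : a ∈ interior (momentSpace n)) :
    PositiveOnUnitInterval (rieszFunctional a) (n + 1) := by
  intro p hp0 hp hnn
  refine (rieszFunctional_nonneg (interior_subset ha) hp hnn).lt_of_ne' fun hzero => hp0 ?_
  have hcoeff (j : Fin n) : p.coeff (j.1 + 1) = 0 := by
    have hmin : IsLocalMin (fun t : ℝ => rieszFunctional (a + t • Pi.single j 1) p) 0 := by
      have : Tendsto (fun t : ℝ => a + t • Pi.single j 1) (𝓝 0) (𝓝 a) := by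
        have : Continuous fun t : ℝ => a + t • (Pi.single j 1 : Fin n → ℝ) := by fun_prop
        simpa using this.tendsto 0
      filter_upwards [this.eventually (mem_interior_iff_mem_nhds.1 ha)] with t ht
      rw [zero_smul, add_zero, hzero]
      exact rieszFunctional_nonneg ht hp hnn
    -- `t ↦ L_{a + t eⱼ} p` is affine, vanishes at `0` and is nonnegative near `0`.
    simp only [rieszFunctional_add_smul_single, hzero, zero_add] at hmin
    exact hmin.hasDerivAt_eq_zero (hasDerivAt_mul_const _)
  ext i
  rcases i with _ | i
  · simpa [rieszFunctional_apply, hcoeff] using hzero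
  · by_cases hi : i < n
    · simpa using hcoeff ⟨i, hi⟩
    · simpa using coeff_eq_zero_of_natDegree_lt (by omega)

theorem isQuadratureRule_rieszFunctional_iff {ι : Type*} [Fintype ι] (v w : ι → ℝ) :
    IsQuadratureRule (rieszFunctional a) (n + 1) v w ↔
      ∑ i, w i = 1 ∧ ∀ j : Fin n, ∑ i, w i * v i ^ (j.1 + 1) = a j := by
  constructor
  · intro hq
    refine ⟨by simpa [rieszFunctional_one] using (hq 1 (by simp)).symm, fun j => ?_⟩
    simpa [rieszFunctional_X_pow_succ] using (hq (X ^ (j.1 + 1)) (by simp)).symm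
  · rintro ⟨hsum, hmom⟩ f hf
    rw [linearMap_apply_eq_of_X_pow (ψ := ∑ i, w i • leval (v i)) (fun k hk => ?_) hf]
    · simp [LinearMap.sum_apply]
    rcases k with _ | k
    · simp [rieszFunctional_one, hsum]
    · simp [rieszFunctional_X_pow_succ a ⟨k, by omega⟩, ← hmom]

end rieszFunctional

theorem injective_cons_zero {α : Type*} [Zero α] [Preorder α] {N : ℕ} {x : Fin N → α}
    (hx : StrictMono x) (hx0 : ∀ k, 0 < x k) : Injective (Fin.cons 0 x : Fin (N + 1) → α) :=
  Fin.cons_injective_iff.2 ⟨fun ⟨k, hk⟩ => (hx0 k).ne' hk, hx.injective⟩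

/-- Gauss–Radau quadrature with the prescribed node `0`: the "lower principal
representation" of the functional `L`. -/
def IsRadauRule (L : ℝ[X] →ₗ[ℝ] ℝ) {N : ℕ} (x : Fin N → ℝ) (w : Fin (N + 1) → ℝ) : Prop :=
  StrictMono x ∧ (∀ k, x k ∈ Ioo (0 : ℝ) 1) ∧ (∀ k, w k ∈ Ioo (0 : ℝ) 1) ∧
    IsQuadratureRule L (2 * N + 1) (Fin.cons 0 x) w

theorem exists_isRadauRule {L : ℝ[X] →ₗ[ℝ] ℝ} {N : ℕ} (hN : 0 < N)
    (hL : PositiveOnUnitInterval L (2 * N + 1)) (hL1 : L 1 = 1) :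
    ∃ (x : Fin N → ℝ) (w : Fin (N + 1) → ℝ), IsRadauRule L x w := by
  obtain ⟨Q, hQ, hQN, horth⟩ := exists_monic_orthogonal (L ∘ₗ LinearMap.mulLeft ℝ X) N
    fun q hq h => hL.eq_zero_of_map_X_mul_mul_self hq h
  obtain ⟨x, hx, hx01, rfl⟩ := hL.exists_roots_of_orthogonal hQ hQN horth
  have hv := injective_cons_zero hx fun k => (hx01 k).1
  have hq : IsQuadratureRule L (2 * N + 1) (Fin.cons 0 x)
      fun k => L (Lagrange.basis Finset.univ (Fin.cons 0 x) k) := by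
    have := isQuadratureRule_of_nodal_orthogonal L hv (d := N) fun r hr => by
      simpa [nodal_cons_zero, mul_assoc] using horth r hr
    rwa [Fintype.card_fin, show N + 1 + N = 2 * N + 1 by ring] at this
  have hpos := hq.weight_pos hL hv (by simp)
  have hsum : ∑ k, L (Lagrange.basis Finset.univ (Fin.cons 0 x) k) = 1 := by
    simpa [hL1] using (hq 1 (by simp)).symm
  refine ⟨x, _, hx, hx01, fun k => ⟨hpos k, ?_⟩, hq⟩
  obtain ⟨j, hj⟩ : ∃ j, j ≠ k := by
    have : Nontrivial (Fin (N + 1)) := Fin.nontrivial_iff_two_le.2 (by omega)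
    exact exists_ne k
  rw [← hsum]
  exact Finset.single_lt_sum hj (Finset.mem_univ k) (Finset.mem_univ j) (hpos j)
    fun i _ _ => (hpos i).le

theorem IsRadauRule.unique {L : ℝ[X] →ₗ[ℝ] ℝ} {N : ℕ} (hL : PositiveOnUnitInterval L (2 * N + 1))
    {x x' : Fin N → ℝ} {w w' : Fin (N + 1) → ℝ} (h : IsRadauRule L x w) (h' : IsRadauRule L x' w') :
    x = x' ∧ w = w' := by
  obtain ⟨hx, hx01, -, hq⟩ := h
  obtain ⟨hx', -, -, hq'⟩ := h'
  have hQ : ∏ k, (X - C (x k)) = ∏ k, (X - C (x' k)) :=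
    monic_orthogonal_unique (L ∘ₗ LinearMap.mulLeft ℝ X) N
      (fun q hq h => hL.eq_zero_of_map_X_mul_mul_self hq h)
      (monic_prod_of_monic _ _ fun k _ => monic_X_sub_C _) (by simp) hq.orthogonal_of_cons_zero
      (monic_prod_of_monic _ _ fun k _ => monic_X_sub_C _) (by simp) hq'.orthogonal_of_cons_zero
  obtain rfl := eq_of_prod_X_sub_C_eq hx hx' hQ
  have hv := injective_cons_zero hx fun k => (hx01 k).1
  refine ⟨rfl, funext fun k => ?_⟩
  rw [hq.weight_eq hv (by simp; omega) k, hq'.weight_eq hv (by simp; omega) k]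

theorem isQuadratureRule_rieszFunctional_cons_iff {n N : ℕ} (a : Fin n → ℝ)
    (x : Fin N → ℝ) {w : Fin (N + 1) → ℝ} (hw : ∀ k, 0 ≤ w k) :
    IsQuadratureRule (rieszFunctional a) (n + 1) (Fin.cons 0 x) w ↔
      ∑ k, w k = 1 ∧ ∀ j : Fin n, ∫ t, t ^ (j.1 + 1)
        ∂(ENNReal.ofReal (w 0) • Measure.dirac (0 : ℝ)
          + ∑ k : Fin N, ENNReal.ofReal (w k.succ) • Measure.dirac (x k)) = a j := by
  have hν : ENNReal.ofReal (w 0) • Measure.dirac (0 : ℝ)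
      + ∑ k : Fin N, ENNReal.ofReal (w k.succ) • Measure.dirac (x k)
      = ∑ k, ENNReal.ofReal (w k) • Measure.dirac ((Fin.cons 0 x : Fin (N + 1) → ℝ) k) := by
    simp [Fin.sum_univ_succ]
  simp only [hν, integral_sum_dirac _ hw, isQuadratureRule_rieszFunctional_iff]

theorem lower_principal_representation_even
    (N : ℕ) (hN : 0 < N) (m : Fin (2 * N) → ℝ)
    (hm : m ∈ interior (momentSpace (2 * N))) :
    ∃! p : (Fin N → ℝ) × (Fin (N + 1) → ℝ),
      StrictMono p.1 ∧ (∀ k, p.1 k ∈ Set.Ioo (0 : ℝ) 1) ∧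
        (∀ k, p.2 k ∈ Set.Ioo (0 : ℝ) 1) ∧ (∑ k, p.2 k = 1) ∧
        ∀ j : Fin (2 * N),
          (∫ x, x ^ (j.1 + 1)
            ∂(ENNReal.ofReal (p.2 0) • Measure.dirac (0 : ℝ)
              + ∑ k : Fin N, ENNReal.ofReal (p.2 k.succ) • Measure.dirac (p.1 k)))
            = m j := by
  have hL := positiveOnUnitInterval_rieszFunctional hm
  obtain ⟨x, w, hxw⟩ := exists_isRadauRule hN hL (rieszFunctional_one m)
  refine (existsUnique_congr (q := fun p => IsRadauRule (rieszFunctional m) p.1 p.2) fun p => ?_).2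
    ⟨(x, w), hxw, fun p hp => Prod.ext_iff.2 (hp.unique hL hxw)⟩
  refine and_congr_right fun _ => and_congr_right fun _ => and_congr_right fun hw => ?_
  exact (isQuadratureRule_rieszFunctional_cons_iff m p.1 fun k => (hw k).1.le).symm
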